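/- arXiv:2505.22254 — 5 statements merged into one kernel-verified Lean document; each statement's English description precedes it below -/
import Mathlib

section
/- Let U be a positive integer and for each coordinate u in {1,...,U}, let μ_u : ℕ → [0,1] be a non-decreasing function. Define h : ℕ^U → ℝ by h(x) = ∏_{u=1}^U (1 - μ_u(x_u)). Then for any x ∈ ℕ^U and any distinct indices l, j, we have h(x) - h(x + χ_l) ≥ h(x + χ_j) - h(x + χ_l + χ_j), where χ_i denotes the i-th standard unit vector. -/
/-!
Write `h x = ∏ u, g u (x u)` with `g u = 1 - μ u` non-negative and antitone. Raising coordinate `l`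
only changes the factor `g l`, so the marginal `h x - h (x + χ_l)` is
`(g l (x l) - g l (x l + 1)) * ∏_{u ≠ l} g u (x u)`. Raising another coordinate `j` leaves the
first factor alone and can only shrink the product of the non-negative antitone factors.
-/

open Finset

theorem prod_sub_prod_add_single {ι R : Type*} [Fintype ι] [DecidableEq ι] [CommRing R]
    (g : ι → ℕ → R) (x : ι → ℕ) (l : ι) (k : ℕ) :
    ∏ u, g u (x u) - ∏ u, g u ((x + Pi.single l k : ι → ℕ) u) =
      (g l (x l) - g l (x l + k)) * ∏ u ∈ univ.erase l, g u (x u) := by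
  have hoff : ∏ u ∈ univ.erase l, g u ((x + Pi.single l k : ι → ℕ) u) = ∏ u ∈ univ.erase l, g u (x u) :=
    prod_congr rfl fun u hu => by simp [ne_of_mem_erase hu]
  rw [← mul_prod_erase univ _ (mem_univ l), ← mul_prod_erase univ _ (mem_univ l), hoff]
  simp only [Pi.add_apply, Pi.single_eq_same]
  ring

theorem prod_sub_prod_add_single_le_of_le {ι R : Type*} [Fintype ι] [DecidableEq ι] [CommRing R]
    [PartialOrder R] [IsOrderedRing R] (g : ι → ℕ → R) (hg0 : ∀ u n, 0 ≤ g u n)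
    (hg : ∀ u, Antitone (g u)) {x y : ι → ℕ} (hxy : x ≤ y) (l : ι) (hl : y l = x l) (k : ℕ) :
    ∏ u, g u (y u) - ∏ u, g u ((y + Pi.single l k : ι → ℕ) u) ≤
      ∏ u, g u (x u) - ∏ u, g u ((x + Pi.single l k : ι → ℕ) u) := by
  rw [prod_sub_prod_add_single, prod_sub_prod_add_single, hl]
  exact mul_le_mul_of_nonneg_left
    (prod_le_prod (fun u _ => hg0 u (y u)) fun u _ => hg u (hxy u))
    (sub_nonneg.2 (hg l (Nat.le_add_right _ _)))

theorem stmt_0_general (U : ℕ) (μ : Fin U → ℕ → ℝ)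
    (hμ1 : ∀ u n, μ u n ≤ 1)
    (hmono : ∀ u, Monotone (μ u))
    (h : (Fin U → ℕ) → ℝ)
    (hdef : ∀ x, h x = ∏ u, (1 - μ u (x u)))
    (x : Fin U → ℕ) (l j : Fin U) (hlj : l ≠ j) :
    h x - h (x + Pi.single l 1) ≥
      h (x + Pi.single j 1) - h (x + Pi.single l 1 + Pi.single j 1) := by
  have hxj : x ≤ x + Pi.single j 1 := le_self_add
  have hl : (x + Pi.single j 1 : Fin U → ℕ) l = x l := by simp [hlj]
  rw [add_right_comm, ge_iff_le, hdef, hdef, hdef, hdef]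
  exact prod_sub_prod_add_single_le_of_le (fun u n => 1 - μ u n)
    (fun u n => sub_nonneg.2 (hμ1 u n)) (fun u _ _ hmn => sub_le_sub_left (hmono u hmn) 1)
    hxj l hl 1

theorem stmt_0 (U : ℕ) (hU : 0 < U) (μ : Fin U → ℕ → ℝ)
    (hμ0 : ∀ u n, 0 ≤ μ u n) (hμ1 : ∀ u n, μ u n ≤ 1)
    (hmono : ∀ u, Monotone (μ u))
    (h : (Fin U → ℕ) → ℝ)
    (hdef : ∀ x, h x = ∏ u, (1 - μ u (x u)))
    (x : Fin U → ℕ) (l j : Fin U) (hlj : l ≠ j) :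
    h x - h (x + Pi.single l 1) ≥
      h (x + Pi.single j 1) - h (x + Pi.single l 1 + Pi.single j 1) :=
  stmt_0_general U μ hμ1 hmono h hdef x l j hlj
end

section
/- Let U, V be finite sets, S ⊆ U × V, g : V → ℝ≥0, and for each edge e = (u,v) ∈ S let μ_e : ℕ → [0,1] be non-decreasing. Define r(b) = Σ_{v ∈ V} g_v (1 - ∏_{e=(u,v) ∈ S} (1 - μ_e(b_u))). Then r is submodular over the integer lattice: r(x ∨ y) + r(x ∧ y) ≤ r(x) + r(y) for all x, y ∈ ℕ^U. -/
/-!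
Submodularity of `r` follows from supermodularity of each survival product
`∏_{e ∋ v} (1 - μ_e(b_u))`, since `g_v ≥ 0`. Each factor is non-negative and antitone in `b_u`,
so at `x ⊔ y` and `x ⊓ y` it takes the pointwise minimum and maximum of its values at `x` and `y`;
supermodularity then reduces to `∏ pᵢ + ∏ qᵢ ≤ ∏ min pᵢ qᵢ + ∏ max pᵢ qᵢ` for non-negative
`p, q`, proved by induction on the index set.
-/

open Finset

section OrderedRing

variable {R : Type*} [CommRing R] [LinearOrder R] [IsStrictOrderedRing R]

theorem Finset.prod_add_prod_le_prod_min_add_prod_max {ι : Type*} (s : Finset ι) {p q : ι → R}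
    (hp : ∀ i ∈ s, 0 ≤ p i) (hq : ∀ i ∈ s, 0 ≤ q i) :
    ∏ i ∈ s, p i + ∏ i ∈ s, q i ≤ ∏ i ∈ s, min (p i) (q i) + ∏ i ∈ s, max (p i) (q i) := by
  induction s using Finset.cons_induction with
  | empty => simp
  | cons a s ha ih =>
    simp only [forall_mem_cons] at hp hq
    have ih := ih hp.2 hq.2
    have hmin_le_p : ∏ i ∈ s, min (p i) (q i) ≤ ∏ i ∈ s, p i :=
      prod_le_prod (fun i hi => le_min (hp.2 i hi) (hq.2 i hi)) fun _ _ => min_le_left _ _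
    have hmin_le_q : ∏ i ∈ s, min (p i) (q i) ≤ ∏ i ∈ s, q i :=
      prod_le_prod (fun i hi => le_min (hp.2 i hi) (hq.2 i hi)) fun _ _ => min_le_right _ _
    simp only [prod_cons]
    -- For `p a ≤ q a`: scale `ih` by `q a`; the swap costs `(q a - p a) (∏ p - ∏ min) ≥ 0`.
    rcases le_total (p a) (q a) with h | h
    · rw [min_eq_left h, max_eq_right h]
      nlinarith [mul_le_mul_of_nonneg_left ih hq.1,
        mul_nonneg (sub_nonneg.2 h) (sub_nonneg.2 hmin_le_p)]
    · rw [min_eq_right h, max_eq_left h]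
      nlinarith [mul_le_mul_of_nonneg_left ih hp.1,
        mul_nonneg (sub_nonneg.2 h) (sub_nonneg.2 hmin_le_q)]

theorem Finset.prod_add_prod_le_prod_sup_add_prod_inf_of_antitone {ι U α : Type*}
    [LinearOrder α] (s : Finset ι) (k : ι → U) {f : ι → α → R} (hf0 : ∀ i ∈ s, ∀ a, 0 ≤ f i a)
    (hf : ∀ i ∈ s, Antitone (f i))
    (x y : U → α) :
    ∏ i ∈ s, f i (x (k i)) + ∏ i ∈ s, f i (y (k i)) ≤
      ∏ i ∈ s, f i ((x ⊔ y) (k i)) + ∏ i ∈ s, f i ((x ⊓ y) (k i)) := by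
  simp only [Pi.sup_apply, Pi.inf_apply]
  rw [prod_congr rfl fun i hi => (hf i hi).map_max, prod_congr rfl fun i hi => (hf i hi).map_min]
  exact prod_add_prod_le_prod_min_add_prod_max s (fun i hi => hf0 i hi _) fun i hi => hf0 i hi _

end OrderedRing

theorem stmt_7_general (U V : Type*) [Fintype V] [DecidableEq V]
    (S : Finset (U × V)) (g : V → ℝ) (hg : ∀ v, 0 ≤ g v)
    (μ : U × V → ℕ → ℝ) (hμ1 : ∀ e n, μ e n ≤ 1)
    (hmono : ∀ e, Monotone (μ e))
    (r : (U → ℕ) → ℝ)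
    (hr : ∀ b, r b = ∑ v, g v * (1 - ∏ e ∈ S.filter (fun e => e.2 = v), (1 - μ e (b e.1))))
    (x y : U → ℕ) :
    r (x ⊔ y) + r (x ⊓ y) ≤ r x + r y := by
  simp only [hr, ← sum_add_distrib]
  refine sum_le_sum fun v _ => ?_
  have hsuper := prod_add_prod_le_prod_sup_add_prod_inf_of_antitone
    (S.filter (fun e => e.2 = v)) Prod.fst (f := fun e n => 1 - μ e n)
    (fun e _ n => sub_nonneg.2 (hμ1 e n))
    (fun e _ _ _ hmn => sub_le_sub_left (hmono e hmn) 1) x y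
  nlinarith [mul_le_mul_of_nonneg_left hsuper (hg v)]

theorem stmt_7 (U V : Type*) [Fintype U] [Fintype V] [DecidableEq U] [DecidableEq V]
    (S : Finset (U × V)) (g : V → ℝ) (hg : ∀ v, 0 ≤ g v)
    (μ : U × V → ℕ → ℝ) (hμ0 : ∀ e n, 0 ≤ μ e n) (hμ1 : ∀ e n, μ e n ≤ 1)
    (hmono : ∀ e, Monotone (μ e))
    (r : (U → ℕ) → ℝ)
    (hr : ∀ b, r b = ∑ v, g v * (1 - ∏ e ∈ S.filter (fun e => e.2 = v), (1 - μ e (b e.1))))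
    (x y : U → ℕ) :
    r (x ⊔ y) + r (x ⊓ y) ≤ r x + r y :=
  stmt_7_general U V S g hg μ hμ1 hmono r hr x y
end

section
/- Let f : ℕ^U → ℝ be monotone (f(x) ≤ f(y) whenever x ≤ y coordinate-wise) and satisfy f(x + χ_i) - f(x) ≥ f(x + χ_j + χ_i) - f(x + χ_j) for distinct i, j as well as the diminishing returns property f(x + χ_i) - f(x) ≥ f(y + χ_i) - f(y) for x ≤ y with x_i = y_i. Then for any x ∈ ℕ^U, index u, and c ∈ ℕ, f(x ∨ c·χ_u) - f(x) ≤ f(c·χ_u) - f(0). -/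
/-!
Write `x ⊔ c•χ_u = x + (c - x_u)•χ_u`. Diminishing returns, applied one unit step at a time to
`x_u•χ_u ≤ x` (which agree at `u`), bounds the gain of adding `(c - x_u)•χ_u` to `x` by the gain
of moving from `x_u•χ_u` to `max x_u c • χ_u`. Along the ray through `χ_u` only monotonicity is
available, and it suffices: the latter gain is `0` when `c ≤ x_u`, and at most
`f(c•χ_u) - f(0)` otherwise.
-/

theorem Monotone.sub_le_sub_of_max {β : Type*} [AddCommGroup β] [PartialOrder β]
    [IsOrderedAddMonoid β] {g : ℕ → β} (hg : Monotone g) (a c : ℕ) :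
    g (max a c) - g a ≤ g c - g 0 := by
  rcases le_total c a with h | h
  · rw [max_eq_left h, sub_self]
    exact sub_nonneg.2 (hg c.zero_le)
  · rw [max_eq_right h]
    exact sub_le_sub_left (hg a.zero_le) _

section SingleNat

variable {ι : Type*} [DecidableEq ι]

theorem Pi.single_apply_self_le (x : ι → ℕ) (u : ι) : Pi.single u (x u) ≤ x := by
  intro i
  by_cases hi : i = u
  · subst hi; simp
  · simp [hi]

theorem Pi.sup_single_eq_add_single_tsub (x : ι → ℕ) (u : ι) (c : ℕ) :
    x ⊔ Pi.single u c = x + Pi.single u (c - x u) := by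
  funext i
  by_cases hi : i = u
  · subst hi; simp [add_tsub_eq_max]
  · simp [hi]

theorem sub_le_sub_add_single_of_diminishing {β : Type*} [AddCommGroup β] [PartialOrder β]
    [IsOrderedAddMonoid β] {f : (ι → ℕ) → β}
    (hdr : ∀ (x y : ι → ℕ) (i : ι), x ≤ y → x i = y i →
      f (y + Pi.single i 1) - f y ≤ f (x + Pi.single i 1) - f x)
    {x y : ι → ℕ} {u : ι} (hxy : x ≤ y) (hu : x u = y u) (d : ℕ) :
    f (y + Pi.single u d) - f y ≤ f (x + Pi.single u d) - f x := by
  induction d with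
  | zero => simp
  | succ d ih =>
    have hstep := hdr (x + Pi.single u d) (y + Pi.single u d) u (add_le_add_left hxy _)
      (by simp [hu])
    rw [Pi.single_add, ← add_assoc, ← add_assoc]
    calc f (y + Pi.single u d + Pi.single u 1) - f y
        = (f (y + Pi.single u d + Pi.single u 1) - f (y + Pi.single u d))
          + (f (y + Pi.single u d) - f y) := by abel
      _ ≤ (f (x + Pi.single u d + Pi.single u 1) - f (x + Pi.single u d))
          + (f (x + Pi.single u d) - f x) := add_le_add hstep ih
      _ = f (x + Pi.single u d + Pi.single u 1) - f x := by abel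

end SingleNat

theorem stmt_10_general (U : ℕ) (f : (Fin U → ℕ) → ℝ)
    (hmono : ∀ x y : Fin U → ℕ, x ≤ y → f x ≤ f y)
    (hdr : ∀ (x y : Fin U → ℕ) (i : Fin U), x ≤ y → x i = y i →
      f (x + Pi.single i 1) - f x ≥ f (y + Pi.single i 1) - f y)
    (x : Fin U → ℕ) (u : Fin U) (c : ℕ) :
    f (x ⊔ Pi.single u c) - f x ≤ f (Pi.single u c) - f 0 := by
  have hline : Monotone fun n => f (Pi.single u n) :=
    fun _ _ h => hmono _ _ (Pi.single_mono _ h)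
  calc f (x ⊔ Pi.single u c) - f x
      = f (x + Pi.single u (c - x u)) - f x := by rw [Pi.sup_single_eq_add_single_tsub]
    _ ≤ f (Pi.single u (x u) + Pi.single u (c - x u)) - f (Pi.single u (x u)) :=
      sub_le_sub_add_single_of_diminishing hdr (Pi.single_apply_self_le x u) (by simp) _
    _ = f (Pi.single u (max (x u) c)) - f (Pi.single u (x u)) := by
      rw [← Pi.single_add, add_tsub_eq_max]
    _ ≤ f (Pi.single u c) - f 0 := by
      simpa only [Pi.single_zero] using hline.sub_le_sub_of_max (x u) c

theorem stmt_10 (U : ℕ) (f : (Fin U → ℕ) → ℝ)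
    (hmono : ∀ x y : Fin U → ℕ, x ≤ y → f x ≤ f y)
    (hpair : ∀ (x : Fin U → ℕ) (i j : Fin U), i ≠ j →
      f (x + Pi.single i 1) - f x ≥
        f (x + Pi.single j 1 + Pi.single i 1) - f (x + Pi.single j 1))
    (hdr : ∀ (x y : Fin U → ℕ) (i : Fin U), x ≤ y → x i = y i →
      f (x + Pi.single i 1) - f x ≥ f (y + Pi.single i 1) - f y)
    (x : Fin U → ℕ) (u : Fin U) (c : ℕ) :
    f (x ⊔ Pi.single u c) - f x ≤ f (Pi.single u c) - f 0 :=
  stmt_10_general U f hmono hdr x u c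
end

section
/- Let f : ℕ^U → ℝ be monotone and submodular on the integer lattice with f(0) = 0, and let b* ∈ ℕ^U. Order the support of b* as indices i*_1, ..., i*_m with values s*_1, ..., s*_m, such that for each k, the marginal gain f(Σ_{j<k} s*_j χ_{i*_j} + s*_k χ_{i*_k}) - f(Σ_{j<k} s*_j χ_{i*_j}) is maximal among remaining indices. Then f(s*_1 χ_{i*_1}) ≥ f(s*_1 χ_{i*_1} + s*_2 χ_{i*_2}) - f(s*_1 χ_{i*_1}) ≥ f(s*_1 χ_{i*_1} + s*_2 χ_{i*_2} + s*_3 χ_{i*_3}) - f(s*_1 χ_{i*_1} + s*_2 χ_{i*_2}); in particular the first marginal gain is at least one third of f(s*_1 χ_{i*_1} + s*_2 χ_{i*_2} + s*_3 χ_{i*_3}). -/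
/-!
Increments at two distinct coordinates have join equal to their sum and meet equal to the base
point, so lattice submodularity yields diminishing marginal gains for them. Each greedy gain is
thus at most the gain of the same increment one step earlier, which the previous greedy choice
dominates; the three gains telescope to the total value, hence the bound by three times the first.
-/

section SingleLattice

variable {ι : Type*} [DecidableEq ι] {i j : ι}

theorem sup_add_single_add_single (a : ι → ℕ) (hij : i ≠ j) (s t : ℕ) :
    (a + Pi.single i s) ⊔ (a + Pi.single j t) = a + Pi.single i s + Pi.single j t := by
  funext k
  simp only [Pi.sup_apply, Pi.add_apply, Pi.single_apply]
  split_ifs <;> simp_all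

theorem inf_add_single_add_single (a : ι → ℕ) (hij : i ≠ j) (s t : ℕ) :
    (a + Pi.single i s) ⊓ (a + Pi.single j t) = a := by
  funext k
  simp only [Pi.inf_apply, Pi.add_apply, Pi.single_apply]
  split_ifs <;> simp_all

theorem marginal_add_single_le_of_submodular {f : (ι → ℕ) → ℝ}
    (hsub : ∀ x y : ι → ℕ, f (x ⊔ y) + f (x ⊓ y) ≤ f x + f y)
    (a : ι → ℕ) (hij : i ≠ j) (s t : ℕ) :
    f (a + Pi.single i s + Pi.single j t) - f (a + Pi.single i s) ≤
      f (a + Pi.single j t) - f a := by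
  have h := hsub (a + Pi.single i s) (a + Pi.single j t)
  rw [sup_add_single_add_single a hij, inf_add_single_add_single a hij] at h
  linarith

end SingleLattice

/-- The greedy ordering is encoded by `hg12` (`(i₁,s₁)` has the largest gain at `0`) and
`hg23` (`(i₂,s₂)` has the largest gain at `s₁·χ_{i₁}`). -/
theorem stmt_11_general (U : ℕ) (f : (Fin U → ℕ) → ℝ)
    (hsub : ∀ x y : Fin U → ℕ, f (x ⊔ y) + f (x ⊓ y) ≤ f x + f y)
    (hzero : f 0 = 0)
    (i₁ i₂ i₃ : Fin U) (h12 : i₁ ≠ i₂) (h23 : i₂ ≠ i₃)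
    (s₁ s₂ s₃ : ℕ)
    (hg12 : f (Pi.single i₂ s₂) - f 0 ≤ f (Pi.single i₁ s₁) - f 0)
    (hg23 : f (Pi.single i₁ s₁ + Pi.single i₃ s₃) - f (Pi.single i₁ s₁) ≤
      f (Pi.single i₁ s₁ + Pi.single i₂ s₂) - f (Pi.single i₁ s₁)) :
    f (Pi.single i₁ s₁) ≥
        f (Pi.single i₁ s₁ + Pi.single i₂ s₂) - f (Pi.single i₁ s₁) ∧
      f (Pi.single i₁ s₁ + Pi.single i₂ s₂) - f (Pi.single i₁ s₁) ≥
        f (Pi.single i₁ s₁ + Pi.single i₂ s₂ + Pi.single i₃ s₃) -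
          f (Pi.single i₁ s₁ + Pi.single i₂ s₂) ∧
      f (Pi.single i₁ s₁) ≥
        (1 / 3) * f (Pi.single i₁ s₁ + Pi.single i₂ s₂ + Pi.single i₃ s₃) := by
  have second_le_first :
      f (Pi.single i₁ s₁ + Pi.single i₂ s₂) - f (Pi.single i₁ s₁) ≤ f (Pi.single i₁ s₁) := by
    have h := marginal_add_single_le_of_submodular hsub 0 h12 s₁ s₂
    simp only [zero_add] at h
    linarith
  have third_le_second :
      f (Pi.single i₁ s₁ + Pi.single i₂ s₂ + Pi.single i₃ s₃) -
          f (Pi.single i₁ s₁ + Pi.single i₂ s₂) ≤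
        f (Pi.single i₁ s₁ + Pi.single i₂ s₂) - f (Pi.single i₁ s₁) :=
    (marginal_add_single_le_of_submodular hsub _ h23 s₂ s₃).trans hg23
  exact ⟨second_le_first, third_le_second, by linarith⟩

/-- Greedy ordering of the first three support elements of `b*`:
`(i₁,s₁)` maximizes the marginal gain w.r.t. `0` (in particular over `(i₂,s₂)` and `(i₃,s₃)`),
and `(i₂,s₂)` maximizes the marginal gain w.r.t. `s₁·χ_{i₁}` (in particular over `(i₃,s₃)`). -/
theorem stmt_11 (U : ℕ) (f : (Fin U → ℕ) → ℝ)
    (hmono : ∀ x y : Fin U → ℕ, x ≤ y → f x ≤ f y)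
    (hsub : ∀ x y : Fin U → ℕ, f (x ⊔ y) + f (x ⊓ y) ≤ f x + f y)
    (hzero : f 0 = 0)
    (i₁ i₂ i₃ : Fin U) (h12 : i₁ ≠ i₂) (h13 : i₁ ≠ i₃) (h23 : i₂ ≠ i₃)
    (s₁ s₂ s₃ : ℕ)
    (hg12 : f (Pi.single i₂ s₂) - f 0 ≤ f (Pi.single i₁ s₁) - f 0)
    (hg13 : f (Pi.single i₃ s₃) - f 0 ≤ f (Pi.single i₁ s₁) - f 0)
    (hg23 : f (Pi.single i₁ s₁ + Pi.single i₃ s₃) - f (Pi.single i₁ s₁) ≤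
      f (Pi.single i₁ s₁ + Pi.single i₂ s₂) - f (Pi.single i₁ s₁)) :
    f (Pi.single i₁ s₁) ≥
        f (Pi.single i₁ s₁ + Pi.single i₂ s₂) - f (Pi.single i₁ s₁) ∧
      f (Pi.single i₁ s₁ + Pi.single i₂ s₂) - f (Pi.single i₁ s₁) ≥
        f (Pi.single i₁ s₁ + Pi.single i₂ s₂ + Pi.single i₃ s₃) -
          f (Pi.single i₁ s₁ + Pi.single i₂ s₂) ∧
      f (Pi.single i₁ s₁) ≥
        (1 / 3) * f (Pi.single i₁ s₁ + Pi.single i₂ s₂ + Pi.single i₃ s₃) :=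
  stmt_11_general U f hsub hzero i₁ i₂ i₃ h12 h23 s₁ s₂ s₃ hg12 hg23
end

section
/- Let F be defined on partial sums as follows: suppose positive reals d, B > 0, non-negative reals c_1, ..., c_m (greedy marginal gains) and step sizes s_1, ..., s_m > 0 with Σ_j s_j ≥ B, and suppose for each step j the per-unit gain satisfies c_j / s_j ≥ (OPT - F_{j-1}) / B, where F_j = F_0 + Σ_{k ≤ j} c_k and OPT ≥ F_0. Then F_m ≥ F_0 + (1 - 1/e)(OPT - F_0). -/
theorem stmt_18 (m : ℕ) (B OPT F0 : ℝ) (hB : 0 < B)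
    (c s : ℕ → ℝ)
    (hc : ∀ j < m, 0 ≤ c j) (hs : ∀ j < m, 0 < s j)
    (hbudget : B ≤ ∑ j ∈ Finset.range m, s j)
    (hOPT : F0 ≤ OPT)
    (hgreedy : ∀ j < m,
      (OPT - (F0 + ∑ k ∈ Finset.range j, c k)) / B ≤ c j / s j) :
    F0 + ∑ j ∈ Finset.range m, c j ≥ F0 + (1 - 1/Real.exp 1) * (OPT - F0) := by
  have key : ∀ n ≤ m,
      OPT - (F0 + ∑ k ∈ Finset.range n, c k) ≤
        (OPT - F0) * Real.exp (-(∑ k ∈ Finset.range n, s k) / B) := by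
    intro n hn
    induction n with
    | zero => simp
    | succ n ih =>
      have hnm : n < m := hn
      have ih' := ih (le_of_lt hnm)
      set Gn := OPT - (F0 + ∑ k ∈ Finset.range n, c k) with hGn
      have hsn := hs n hnm
      have hcn := hc n hnm
      have hg := hgreedy n hnm
      -- c n ≥ s n * Gn / B
      have hcge : s n * Gn / B ≤ c n := by
        rw [div_le_div_iff₀ hB hsn] at hg
        rw [div_le_iff₀ hB]
        have hg' : Gn * s n ≤ c n * B := by rw [hGn]; exact hg
        linarith [mul_comm (s n) Gn, hg']
      have hstep : OPT - (F0 + ∑ k ∈ Finset.range (n+1), c k) ≤ Gn * (1 - s n / B) := by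
        rw [Finset.sum_range_succ]
        have : Gn * (1 - s n / B) = Gn - s n * Gn / B := by ring
        rw [this]
        simp only [hGn]; linarith
      have hG0 : 0 ≤ OPT - F0 := by linarith
      have hexp : (0:ℝ) < Real.exp (-(∑ k ∈ Finset.range n, s k) / B) := Real.exp_pos _
      have sumsucc : (∑ k ∈ Finset.range (n+1), s k) = (∑ k ∈ Finset.range n, s k) + s n :=
        Finset.sum_range_succ _ _
      rcases le_or_gt Gn 0 with hGneg | hGpos
      · have : OPT - (F0 + ∑ k ∈ Finset.range (n+1), c k) ≤ 0 := by
          rw [Finset.sum_range_succ]; simp only [hGn] at hGneg ⊢; linarith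
        exact this.trans (mul_nonneg hG0 (Real.exp_pos _).le)
      · rcases le_or_gt (1 - s n / B) 0 with hfac | hfac
        · have : OPT - (F0 + ∑ k ∈ Finset.range (n+1), c k) ≤ 0 :=
            hstep.trans (mul_nonpos_of_nonneg_of_nonpos hGpos.le hfac)
          exact this.trans (mul_nonneg hG0 (Real.exp_pos _).le)
        · have h1 : 1 - s n / B ≤ Real.exp (-(s n / B)) := by
            have := Real.add_one_le_exp (-(s n / B))
            linarith
          calc OPT - (F0 + ∑ k ∈ Finset.range (n+1), c k)
              ≤ Gn * (1 - s n / B) := hstep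
            _ ≤ ((OPT - F0) * Real.exp (-(∑ k ∈ Finset.range n, s k) / B)) * (1 - s n / B) := by
                apply mul_le_mul_of_nonneg_right ih' hfac.le
            _ ≤ ((OPT - F0) * Real.exp (-(∑ k ∈ Finset.range n, s k) / B)) * Real.exp (-(s n / B)) := by
                apply mul_le_mul_of_nonneg_left h1
                exact mul_nonneg hG0 hexp.le
            _ = (OPT - F0) * Real.exp (-(∑ k ∈ Finset.range (n+1), s k) / B) := by
                rw [mul_assoc, ← Real.exp_add, sumsucc]
                ring_nf
  have hfin := key m le_rfl
  have hratio : -(∑ k ∈ Finset.range m, s k) / B ≤ -1 := by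
    rw [div_le_iff₀ hB]
    linarith
  have hmono : Real.exp (-(∑ k ∈ Finset.range m, s k) / B) ≤ Real.exp (-1) :=
    Real.exp_le_exp.mpr hratio
  have hG0 : 0 ≤ OPT - F0 := by linarith
  have hfin2 : OPT - (F0 + ∑ k ∈ Finset.range m, c k) ≤ (OPT - F0) * Real.exp (-1) :=
    hfin.trans (mul_le_mul_of_nonneg_left hmono hG0)
  have hexpneg : Real.exp (-1) = 1 / Real.exp 1 := by
    rw [Real.exp_neg]; ring
  rw [hexpneg] at hfin2
  nlinarith [hfin2]
end
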